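/- For every z ∈ ℂ, the family n ↦ 1 + 16z²/(π²(2n+1)²) (indexed by integers n ≥ 0) is multipliable and ∏_{n=0}^∞ (1 + 16z²/(π²(2n+1)²)) = cosh(2z). Equivalently, with λ_n = 4/(π(2n+1)), ∏_{n=0}^∞ [(1 − iλ_n z)·exp(iλ_n z)·(1 + iλ_n z)·exp(−iλ_n z)] = cosh(2z). -/

import Mathlib

/-!
Since `cos (π u / 2) = sin (π (u + 1) / 2)`, Euler's sine product at `(u + 1) / 2`, divided by the
one at `1 / 2` (which tends to `sin (π / 2) = 1`), telescopes to the partial products of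
`∏ (1 - u² / (2n + 1)²)` up to the factor `(2N + 1 + u) / (2N + 1) → 1`; so this product is
`cos (π u / 2)`. Taking `u = 4 i z / π` gives `cosh 2z`, and in the second product the
exponential factors of `λ` and `-λ` cancel, leaving the same factors `1 + 16 z² / (π² (2n + 1)²)`.
-/

open Complex Real Filter Finset Topology

lemma prod_range_one_sub_sq_div_odd_sq_mul (u : ℂ) (N : ℕ) :
    (∏ m ∈ range N, (1 - u ^ 2 / (2 * (m : ℂ) + 1) ^ 2)) * (2 * N + 1 + u) *
        ∏ j ∈ range N, (1 - (1 / 2) ^ 2 / ((j : ℂ) + 1) ^ 2) =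
      (u + 1) * (∏ j ∈ range N, (1 - ((u + 1) / 2) ^ 2 / ((j : ℂ) + 1) ^ 2)) * (2 * N + 1) := by
  induction N with
  | zero => simp [add_comm]
  | succ N ih =>
    have hodd : (2 * (N : ℂ) + 1) ≠ 0 := by exact_mod_cast (2 * N).succ_ne_zero
    have hsucc : ((N : ℂ) + 1) ≠ 0 := N.cast_add_one_ne_zero
    have hstep : (1 - u ^ 2 / (2 * (N : ℂ) + 1) ^ 2) * (2 * N + 3 + u) *
          (1 - (1 / 2) ^ 2 / ((N : ℂ) + 1) ^ 2) * (2 * N + 1) =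
        (1 - ((u + 1) / 2) ^ 2 / ((N : ℂ) + 1) ^ 2) * (2 * N + 3) * (2 * N + 1 + u) := by
      field_simp
      ring
    refine mul_right_cancel₀ hodd ?_
    simp only [prod_range_succ, Nat.cast_succ]
    linear_combination (1 - ((u + 1) / 2) ^ 2 / ((N : ℂ) + 1) ^ 2) * (2 * N + 3) * ih +
      (∏ m ∈ range N, (1 - u ^ 2 / (2 * (m : ℂ) + 1) ^ 2)) *
        (∏ j ∈ range N, (1 - (1 / 2) ^ 2 / ((j : ℂ) + 1) ^ 2)) * hstep

lemma tendsto_prod_range_one_sub_sq_div_odd_sq (u : ℂ) :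
    Tendsto (fun N : ℕ => ∏ m ∈ range N, (1 - u ^ 2 / (2 * (m : ℂ) + 1) ^ 2)) atTop
      (𝓝 (cos (π * u / 2))) := by
  set D : ℕ → ℂ := fun N => (1 + u + 2 * N) / (1 + 2 * N) *
    (π / 2 * ∏ j ∈ range N, (1 - (1 / 2) ^ 2 / ((j : ℂ) + 1) ^ 2))
  have hD : Tendsto D atTop (𝓝 1) := by
    have := (tendsto_add_mul_div_add_mul_atTop_nhds (1 + u) 1 2 two_ne_zero).mul
      (Complex.tendsto_euler_sin_prod (1 / 2))
    rwa [div_self two_ne_zero, one_mul, mul_one_div, Complex.sin_pi_div_two] at this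
  have hOD (N : ℕ) : (∏ m ∈ range N, (1 - u ^ 2 / (2 * (m : ℂ) + 1) ^ 2)) * D N =
      π * ((u + 1) / 2) * ∏ j ∈ range N, (1 - ((u + 1) / 2) ^ 2 / ((j : ℂ) + 1) ^ 2) := by
    have hodd : (1 + 2 * (N : ℂ)) ≠ 0 := by norm_cast; omega
    have hcancel : (2 * N + 1) * (π / 2 / (1 + 2 * N)) = (π / 2 : ℂ) := by field_simp; ring
    linear_combination π / 2 / (1 + 2 * N) * prod_range_one_sub_sq_div_odd_sq_mul u N +
      (u + 1) * (∏ j ∈ range N, (1 - ((u + 1) / 2) ^ 2 / ((j : ℂ) + 1) ^ 2)) * hcancel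
  have hsin : Complex.sin (π * ((u + 1) / 2)) = cos (π * u / 2) := by
    rw [← Complex.sin_add_pi_div_two]; ring_nf
  have hFD := (Complex.tendsto_euler_sin_prod ((u + 1) / 2)).div hD one_ne_zero
  rw [div_one, hsin] at hFD
  refine hFD.congr' ?_
  filter_upwards [hD.eventually_ne one_ne_zero] with N hN
  rw [Pi.div_apply, ← hOD N, mul_div_cancel_right₀ _ hN]

lemma multipliable_one_sub_sq_div_odd_sq (u : ℂ) :
    Multipliable fun n : ℕ => 1 - u ^ 2 / (2 * (n : ℂ) + 1) ^ 2 := by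
  simp_rw [sub_eq_add_neg]
  refine Complex.multipliable_one_add_of_summable <|
    Summable.of_norm_bounded (summable_pow_div_add (u ^ 2) 2 1 one_lt_two) fun n => ?_
  have hcast : (2 * (n : ℂ) + 1) = ((2 * n + 1 : ℕ) : ℂ) := by push_cast; ring
  simp only [norm_neg, norm_div, norm_pow, hcast, ← Nat.cast_add, Complex.norm_natCast]
  gcongr
  omega

lemma hasProd_one_sub_sq_div_odd_sq (u : ℂ) :
    HasProd (fun n : ℕ => 1 - u ^ 2 / (2 * (n : ℂ) + 1) ^ 2) (cos (π * u / 2)) :=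
  (multipliable_one_sub_sq_div_odd_sq u).hasProd_iff_tendsto_nat.mpr
    (tendsto_prod_range_one_sub_sq_div_odd_sq u)

lemma hasProd_one_add_sq_div_odd_sq_cosh (z : ℂ) :
    HasProd (fun n : ℕ => 1 + 16 * z ^ 2 / ((π : ℂ) ^ 2 * (2 * (n : ℂ) + 1) ^ 2))
      (cosh (2 * z)) := by
  have hpi : (π : ℂ) ≠ 0 := ofReal_ne_zero.mpr pi_ne_zero
  convert hasProd_one_sub_sq_div_odd_sq (4 * z * I / π) using 1
  · funext n
    rw [div_pow, mul_pow, mul_pow, I_sq, div_div]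
    ring
  · rw [← cos_mul_I]
    congr 1
    field_simp
    ring

lemma one_sub_mul_exp_mul_one_add_mul_exp_neg (a : ℂ) :
    (1 - a) * exp a * ((1 + a) * exp (-a)) = 1 - a ^ 2 := by
  rw [mul_mul_mul_comm, ← Complex.exp_add, add_neg_cancel, Complex.exp_zero]
  ring

/-- The 2-modified (Hilbert–Schmidt) Fredholm determinant of the integral
operator on `L²(−1,1)` with kernel `sgn(x−y)`, whose eigenvalues are
`λ_n = −4i/(π(2n+1))` together with their conjugates: for every `z ∈ ℂ`,
`∏_{n≥0} (1 + 16z²/(π²(2n+1)²)) = cosh(2z)`; equivalently, with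
`λ_n = 4/(π(2n+1))`,
`∏_{n≥0} (1 − iλ_n z)e^{iλ_n z}(1 + iλ_n z)e^{−iλ_n z} = cosh(2z)`. -/
theorem stmt_13 (z : ℂ) :
    Multipliable (fun n : ℕ =>
      1 + 16 * z ^ 2 / ((π : ℂ) ^ 2 * (2 * (n : ℂ) + 1) ^ 2)) ∧
    (∏' n : ℕ, (1 + 16 * z ^ 2 / ((π : ℂ) ^ 2 * (2 * (n : ℂ) + 1) ^ 2))) =
      Complex.cosh (2 * z) ∧
    Multipliable (fun n : ℕ =>
      (1 - Complex.I * (4 / ((π : ℂ) * (2 * (n : ℂ) + 1))) * z) *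
        Complex.exp (Complex.I * (4 / ((π : ℂ) * (2 * (n : ℂ) + 1))) * z) *
        ((1 + Complex.I * (4 / ((π : ℂ) * (2 * (n : ℂ) + 1))) * z) *
          Complex.exp (-(Complex.I * (4 / ((π : ℂ) * (2 * (n : ℂ) + 1))) * z)))) ∧
    (∏' n : ℕ,
      (1 - Complex.I * (4 / ((π : ℂ) * (2 * (n : ℂ) + 1))) * z) *
        Complex.exp (Complex.I * (4 / ((π : ℂ) * (2 * (n : ℂ) + 1))) * z) *
        ((1 + Complex.I * (4 / ((π : ℂ) * (2 * (n : ℂ) + 1))) * z) *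
          Complex.exp (-(Complex.I * (4 / ((π : ℂ) * (2 * (n : ℂ) + 1))) * z)))) =
      Complex.cosh (2 * z) := by
  have hcosh := hasProd_one_add_sq_div_odd_sq_cosh z
  have hfactor : (fun n : ℕ =>
      (1 - I * (4 / ((π : ℂ) * (2 * (n : ℂ) + 1))) * z) *
        exp (I * (4 / ((π : ℂ) * (2 * (n : ℂ) + 1))) * z) *
        ((1 + I * (4 / ((π : ℂ) * (2 * (n : ℂ) + 1))) * z) *
          exp (-(I * (4 / ((π : ℂ) * (2 * (n : ℂ) + 1))) * z)))) =
      fun n : ℕ => 1 + 16 * z ^ 2 / ((π : ℂ) ^ 2 * (2 * (n : ℂ) + 1) ^ 2) := by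
    funext n
    rw [one_sub_mul_exp_mul_one_add_mul_exp_neg, mul_pow, mul_pow, I_sq, div_pow, mul_pow]
    ring
  rw [hfactor]
  exact ⟨hcosh.multipliable, hcosh.tprod_eq, hcosh.multipliable, hcosh.tprod_eq⟩
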